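/- Let p be an odd prime and let G = ⟨x, y⟩ be a finite non-abelian p-group such that x^p and y^p are central and the derived subgroup [G,G] is cyclic. Then G/Z(G) is elementary abelian of rank two (equivalently, Frattini subgroup Frat(G) equals Z(G) and G/Z(G) ≅ C_p × C_p). -/

import Mathlib

/-!
Write `c = ⁅x, y⁆`. Since `G'` is cyclic and normal, every `z` acts on it by a power map
`c ↦ c ^ b`. For `z = y`, centrality of `y ^ p` gives `c ^ (b ^ p - 1) = 1` and
`1 = ⁅x, y ^ p⁆ = c ^ (1 + b + ⋯ + b ^ (p - 1))`; as `c` has `p`-power order and `p` is odd,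
this forces `c ^ (b - 1) = 1`, i.e. `y` commutes with `c`, and symmetrically so does `x`.
Hence `c` is central, so `G ⧸ Z(G)` is abelian, generated by two elements of order dividing `p`,
and not cyclic: it is `C_p × C_p`. The same count shows `Z(G) = ⟨c, x ^ p, y ^ p⟩`, and these
generators lie in every maximal subgroup `M`, because `G ⧸ M` has order `p`. Conversely the
Frattini subgroup maps into that of `C_p × C_p`, which is trivial.
-/

open Subgroup Finset commutatorElement

namespace Int

lemma dvd_sub_one_of_dvd_pow_sub_one {p : ℕ} (hp : p.Prime) {b : ℤ}
    (h : (p : ℤ) ∣ b ^ p - 1) : (p : ℤ) ∣ b - 1 := by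
  have := Fact.mk hp
  rw [← ZMod.intCast_eq_intCast_iff_dvd_sub] at h ⊢
  push_cast at h ⊢
  rwa [ZMod.pow_card] at h

lemma not_sq_dvd_geom_sum_of_dvd_sub_one {p : ℕ} (hp : p.Prime) (hodd : Odd p) {b : ℤ}
    (hb : (p : ℤ) ∣ b - 1) : ¬ (p : ℤ) ^ 2 ∣ ∑ i ∈ Finset.range p, b ^ i := by
  obtain ⟨d, hd⟩ := hb
  obtain rfl : b = 1 + p * d := by linarith
  intro h
  have hsq : (p : ℤ) ^ 2 ∣ p := by
    simpa using dvd_sub h (odd_sq_dvd_geom_sum₂_sub (1 : ℤ) d hodd)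
  have := Int.le_of_dvd (by exact_mod_cast hp.pos) hsq
  nlinarith [show (1 : ℤ) < p by exact_mod_cast hp.one_lt]

lemma dvd_sub_one_of_dvd_geom_sum {p n k : ℕ} (hp : p.Prime) (hodd : Odd p) {b : ℤ}
    (hn : n ∣ p ^ k) (hpow : (n : ℤ) ∣ b ^ p - 1)
    (hsum : (n : ℤ) ∣ ∑ i ∈ Finset.range p, b ^ i) : (n : ℤ) ∣ b - 1 := by
  obtain ⟨m, -, rfl⟩ := (Nat.dvd_prime_pow hp).mp hn
  rcases m with _ | m
  · simp
  have hp_dvd : (p : ℤ) ∣ (p : ℤ) ^ (m + 1) := dvd_pow_self _ m.succ_ne_zero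
  have hb : (p : ℤ) ∣ b - 1 :=
    dvd_sub_one_of_dvd_pow_sub_one hp (hp_dvd.trans (by exact_mod_cast hpow))
  obtain rfl : m = 0 := by
    by_contra hm
    exact not_sq_dvd_geom_sum_of_dvd_sub_one hp hodd hb
      ((pow_dvd_pow (p : ℤ) (show 2 ≤ m + 1 by omega)).trans (by exact_mod_cast hsum))
  simpa using hb

end Int

section Group

variable {G : Type*} [Group G]

lemma conj_pow_eq_zpow_pow {y a : G} {b : ℤ} (h : y * a * y⁻¹ = a ^ b) (n : ℕ) :
    y ^ n * a * (y ^ n)⁻¹ = a ^ b ^ n := by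
  induction n with
  | zero => simp
  | succ n ih =>
    calc y ^ (n + 1) * a * (y ^ (n + 1))⁻¹ = y * (y ^ n * a * (y ^ n)⁻¹) * y⁻¹ := by group
      _ = (y * a * y⁻¹) ^ b ^ n := by rw [ih, conj_zpow]
      _ = a ^ b ^ (n + 1) := by rw [h, ← zpow_mul, pow_succ']

lemma commutatorElement_pow_right {x y : G} {b : ℤ} (h : y * ⁅x, y⁆ * y⁻¹ = ⁅x, y⁆ ^ b)
    (n : ℕ) : ⁅x, y ^ n⁆ = ⁅x, y⁆ ^ ∑ i ∈ range n, b ^ i := by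
  induction n with
  | zero => simp
  | succ n ih =>
    calc ⁅x, y ^ (n + 1)⁆ = ⁅x, y⁆ * (y * ⁅x, y ^ n⁆ * y⁻¹) := by
          simp only [commutatorElement_def, pow_succ']; group
      _ = ⁅x, y⁆ ^ ∑ i ∈ range (n + 1), b ^ i := by
          rw [ih, ← conj_zpow, h, ← zpow_mul, geom_sum_succ, add_comm, zpow_one_add]

lemma exists_conj_eq_zpow_of_isCyclic {K : Subgroup G} [K.Normal] [IsCyclic K] (z : G) :
    ∃ b : ℤ, ∀ a ∈ K, z * a * z⁻¹ = a ^ b := by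
  obtain ⟨g, hg⟩ := IsCyclic.exists_generator (α := K)
  have hconj : z * g * z⁻¹ ∈ K := ‹K.Normal›.conj_mem _ g.2 z
  obtain ⟨b, hb⟩ := mem_zpowers_iff.mp (hg ⟨_, hconj⟩)
  refine ⟨b, fun a ha => ?_⟩
  obtain ⟨s, hs⟩ := mem_zpowers_iff.mp (hg ⟨a, ha⟩)
  rw [Subtype.ext_iff] at hb hs
  push_cast at hb hs
  rw [← hs, ← conj_zpow, ← hb, ← zpow_mul, ← zpow_mul, mul_comm]

lemma commute_commutatorElement_of_conj_eq_zpow {p k : ℕ} (hp : p.Prime) (hodd : Odd p)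
    {x y : G} {b : ℤ} (hc : ⁅x, y⁆ ^ p ^ k = 1)
    (hb : y * ⁅x, y⁆ * y⁻¹ = ⁅x, y⁆ ^ b) (hy : y ^ p ∈ center G) :
    Commute y ⁅x, y⁆ := by
  have hpow : ⁅x, y⁆ ^ (b ^ p - 1) = 1 := by
    have h := conj_pow_eq_zpow_pow hb p
    rw [← mem_center_iff.mp hy, mul_inv_cancel_right] at h
    rw [zpow_sub_one, ← h, mul_inv_cancel]
  have hsum : ⁅x, y⁆ ^ ∑ i ∈ range p, b ^ i = 1 := by
    rw [← commutatorElement_pow_right hb p, commutatorElement_eq_one_iff_mul_comm]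
    exact mem_center_iff.mp hy x
  have hb1 : ⁅x, y⁆ ^ (b - 1) = 1 := orderOf_dvd_iff_zpow_eq_one.mp <|
    Int.dvd_sub_one_of_dvd_geom_sum hp hodd (orderOf_dvd_of_pow_eq_one hc)
      (orderOf_dvd_iff_zpow_eq_one.mpr hpow) (orderOf_dvd_iff_zpow_eq_one.mpr hsum)
  rw [zpow_sub_one, mul_inv_eq_one, ← hb] at hb1
  exact mul_inv_eq_iff_eq_mul.mp hb1

lemma mem_center_of_commute_of_closure_eq_top {x y a : G} (hgen : closure {x, y} = ⊤)
    (hx : Commute x a) (hy : Commute y a) : a ∈ center G := by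
  rw [← centralizer_univ, ← coe_top, ← hgen, centralizer_closure, mem_centralizer_iff]
  rintro g (rfl | rfl)
  exacts [hx, hy]

theorem IsPGroup.commutatorElement_mem_center {p : ℕ} (hp : p.Prime) (hodd : Odd p)
    (hpG : IsPGroup p G) [IsCyclic (commutator G)] {x y : G} (hgen : closure {x, y} = ⊤)
    (hx : x ^ p ∈ center G) (hy : y ^ p ∈ center G) : ⁅x, y⁆ ∈ center G := by
  have hmem (a b : G) : ⁅a, b⁆ ∈ commutator G :=
    commutator_mem_commutator (mem_top a) (mem_top b)
  obtain ⟨k, hk⟩ := hpG ⁅x, y⁆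
  obtain ⟨s, hs⟩ := exists_conj_eq_zpow_of_isCyclic (K := commutator G) x
  obtain ⟨t, ht⟩ := exists_conj_eq_zpow_of_isCyclic (K := commutator G) y
  refine mem_center_of_commute_of_closure_eq_top hgen ?_
    (commute_commutatorElement_of_conj_eq_zpow hp hodd hk (ht _ (hmem x y)) hy)
  have hk' : ⁅y, x⁆ ^ p ^ k = 1 := by rw [← commutatorElement_inv, inv_pow, hk, inv_one]
  have := commute_commutatorElement_of_conj_eq_zpow hp hodd hk' (hs _ (hmem y x)) hx
  rwa [← commutatorElement_inv, Commute.inv_right_iff] at this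

end Group

lemma Nat.card_multiplicative_zmod (p : ℕ) : Nat.card (Multiplicative (ZMod p)) = p :=
  (Nat.card_congr Multiplicative.toAdd).trans (Nat.card_zmod p)

section

variable {G : Type*} [Group G] {p : ℕ}

lemma exists_zmod_hom_apply_intCast {w : G} (hw : w ^ p = 1) :
    ∃ f : Multiplicative (ZMod p) →* G, ∀ a : ℤ, f (.ofAdd a) = w ^ a :=
  ⟨AddMonoidHom.toMultiplicativeLeft (ZMod.lift p ⟨zmultiplesHom _ (.ofMul w), by simpa⟩),
    fun a => by simp⟩

lemma exists_zmod_prod_surjective {u v : G} (hgen : closure {u, v} = ⊤)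
    (huv : Commute u v) (hu : u ^ p = 1) (hv : v ^ p = 1) :
    ∃ φ : Multiplicative (ZMod p) × Multiplicative (ZMod p) →* G, Function.Surjective φ := by
  obtain ⟨f, hf⟩ := exists_zmod_hom_apply_intCast hu
  obtain ⟨g, hg⟩ := exists_zmod_hom_apply_intCast hv
  have hfg (m n : Multiplicative (ZMod p)) : Commute (f m) (g n) := by
    obtain ⟨a, ha⟩ := ZMod.intCast_surjective m.toAdd
    obtain ⟨b, hb⟩ := ZMod.intCast_surjective n.toAdd
    rw [← ofAdd_toAdd m, ← ha, hf, ← ofAdd_toAdd n, ← hb, hg]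
    exact huv.zpow_zpow a b
  refine ⟨f.noncommCoprod g hfg, ?_⟩
  rw [← MonoidHom.range_eq_top, eq_top_iff, ← hgen, closure_le]
  rintro _ (rfl | rfl)
  · exact ⟨(.ofAdd 1, 1), by simpa using hf 1⟩
  · exact ⟨(1, .ofAdd 1), by simpa using hg 1⟩

lemma QuotientGroup.exists_zmod_prod_surjective {x y : G} (hgen : closure {x, y} = ⊤)
    (H : Subgroup G) [H.Normal] (hc : ⁅x, y⁆ ∈ H) (hx : x ^ p ∈ H) (hy : y ^ p ∈ H) :
    ∃ φ : Multiplicative (ZMod p) × Multiplicative (ZMod p) →* G ⧸ H,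
      Function.Surjective φ := by
  have hmk : Function.Surjective (QuotientGroup.mk' H) := QuotientGroup.mk'_surjective H
  refine _root_.exists_zmod_prod_surjective (u := QuotientGroup.mk' H x)
    (v := QuotientGroup.mk' H y) ?_ ?_ ?_ ?_
  · rw [← Set.image_pair, ← MonoidHom.map_closure, hgen, map_top_of_surjective _ hmk]
  · rw [Commute, SemiconjBy, ← commutatorElement_eq_one_iff_mul_comm, ← map_commutatorElement]
    exact (QuotientGroup.eq_one_iff _).mpr hc
  · rwa [← map_pow, QuotientGroup.mk'_apply, QuotientGroup.eq_one_iff]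
  · rwa [← map_pow, QuotientGroup.mk'_apply, QuotientGroup.eq_one_iff]

lemma index_dvd_sq_of_closure_pair_eq_top {x y : G} (hgen : closure {x, y} = ⊤)
    {H : Subgroup G} [H.Normal] (hc : ⁅x, y⁆ ∈ H) (hx : x ^ p ∈ H) (hy : y ^ p ∈ H) :
    H.index ∣ p ^ 2 := by
  obtain ⟨φ, hφ⟩ := QuotientGroup.exists_zmod_prod_surjective hgen H hc hx hy
  simpa [index_eq_card, Nat.card_prod, Nat.card_multiplicative_zmod, sq] using
    card_dvd_of_surjective φ hφ

lemma card_eq_prime_sq_of_not_isCyclic (hp : p.Prime) (hdvd : Nat.card G ∣ p ^ 2)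
    (hG : ¬IsCyclic G) : Nat.card G = p ^ 2 := by
  have := Fact.mk hp
  obtain ⟨k, hk, hcard⟩ := (Nat.dvd_prime_pow hp).mp hdvd
  obtain rfl | hk1 : k = 2 ∨ k ≤ 1 := by omega
  · exact hcard
  · exact absurd (isCyclic_of_card_dvd_prime (hcard ▸ pow_one p ▸ pow_dvd_pow p hk1)) hG

lemma Subgroup.normal_of_le_center {H : Subgroup G} (h : H ≤ center G) : H.Normal :=
  ⟨fun n hn g => by rwa [mem_center_iff.mp (h hn) g, mul_inv_cancel_right]⟩

lemma Subgroup.eq_of_le_of_index_dvd {H K : Subgroup G} (hle : H ≤ K) (hK : K.index ≠ 0)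
    (hdvd : H.index ∣ K.index) : H = K := by
  refine le_antisymm hle (relIndex_eq_one.mp ?_)
  rw [← relIndex_mul_index hle] at hdvd
  exact Nat.dvd_one.mp
    ((Nat.mul_dvd_mul_iff_right (Nat.pos_of_ne_zero hK)).mp (by simpa using hdvd))

lemma closure_commutatorElement_pow_eq_center {x y : G} (hgen : closure {x, y} = ⊤)
    (hc : ⁅x, y⁆ ∈ center G) (hx : x ^ p ∈ center G) (hy : y ^ p ∈ center G)
    (hZ : (center G).index = p ^ 2) (hp : p ≠ 0) :
    closure {⁅x, y⁆, x ^ p, y ^ p} = center G := by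
  have hle : closure {⁅x, y⁆, x ^ p, y ^ p} ≤ center G := by
    rw [closure_le]
    rintro _ (rfl | rfl | rfl) <;> assumption
  have := normal_of_le_center hle
  refine eq_of_le_of_index_dvd hle (hZ ▸ pow_ne_zero 2 hp) ?_
  rw [hZ]
  exact index_dvd_sq_of_closure_pair_eq_top hgen (subset_closure (by simp))
    (subset_closure (by simp)) (subset_closure (by simp))

end

section Frattini

variable {G H : Type*} [Group G] [Group H]

lemma frattini_prod_le : frattini (G × H) ≤ (frattini G).prod (frattini H) := fun _ hg =>
  ⟨frattini_le_comap_frattini_of_surjective (φ := MonoidHom.fst G H) Prod.fst_surjective hg,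
    frattini_le_comap_frattini_of_surjective (φ := MonoidHom.snd G H) Prod.snd_surjective hg⟩

lemma frattini_eq_bot_of_isSimpleGroup {C : Type*} [CommGroup C] [IsSimpleGroup C] :
    frattini C = ⊥ :=
  le_bot_iff.mp (frattini_le_coatom isCoatom_bot)

lemma frattini_le_ker_of_surjective {φ : G →* H} (hφ : Function.Surjective φ)
    (h : frattini H = ⊥) : frattini G ≤ φ.ker := by
  simpa [h] using frattini_le_comap_frattini_of_surjective hφ

lemma frattini_zmod_prod_eq_bot (p : ℕ) [Fact p.Prime] :
    frattini (Multiplicative (ZMod p) × Multiplicative (ZMod p)) = ⊥ := by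
  have : IsSimpleGroup (Multiplicative (ZMod p)) :=
    isSimpleGroup_of_prime_card (Nat.card_multiplicative_zmod p)
  rw [eq_bot_iff, ← bot_prod_bot, ← frattini_eq_bot_of_isSimpleGroup]
  exact frattini_prod_le

end Frattini

namespace IsPGroup

variable {G : Type*} [Group G] [Finite G] {p : ℕ} [hp : Fact p.Prime] {M : Subgroup G}

lemma normal_of_isCoatom (hpG : IsPGroup p G) (hM : IsCoatom M) : M.Normal :=
  have := hpG.isNilpotent
  NormalizerCondition.normal_of_coatom M Group.normalizerCondition_of_isNilpotent hM

lemma card_quotient_eq_of_isCoatom (hpG : IsPGroup p G) [M.Normal] (hM : IsCoatom M) :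
    Nat.card (G ⧸ M) = p := by
  have : Nontrivial (G ⧸ M) := QuotientGroup.nontrivial_iff.mpr hM.1
  obtain ⟨q, hq⟩ := exists_prime_orderOf_dvd_card' p
    ((hpG.to_quotient M).card_eq_or_dvd.resolve_left Finite.one_lt_card.ne')
  have hq1 : q ≠ 1 := by
    rintro rfl
    exact hp.out.ne_one (orderOf_one.symm.trans hq).symm
  have hmk := QuotientGroup.mk'_surjective M
  have htop : (zpowers q).comap (QuotientGroup.mk' M) = ⊤ := by
    refine (hM.le_iff.mp ?_).resolve_right fun h => hq1 ?_
    · simpa using MonoidHom.ker_le_comap (QuotientGroup.mk' M) (zpowers q)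
    · have := congrArg (Subgroup.map (QuotientGroup.mk' M)) h
      rw [map_comap_eq_self_of_surjective hmk, QuotientGroup.map_mk'_self] at this
      simpa [this] using mem_zpowers q
  rw [← hq, ← Nat.card_zpowers, ← map_comap_eq_self_of_surjective hmk (zpowers q), htop,
    map_top_of_surjective _ hmk, card_top]

lemma pow_mem_of_isCoatom (hpG : IsPGroup p G) (hM : IsCoatom M) (g : G) : g ^ p ∈ M := by
  have := hpG.normal_of_isCoatom hM
  rw [← QuotientGroup.eq_one_iff, QuotientGroup.mk_pow, ← hpG.card_quotient_eq_of_isCoatom hM,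
    pow_card_eq_one']

lemma commutatorElement_mem_of_isCoatom (hpG : IsPGroup p G) (hM : IsCoatom M) (a b : G) :
    ⁅a, b⁆ ∈ M := by
  have := hpG.normal_of_isCoatom hM
  have := isCyclic_of_prime_card (hpG.card_quotient_eq_of_isCoatom hM)
  let := IsCyclic.commGroup (α := G ⧸ M)
  rw [← QuotientGroup.eq_one_iff, ← QuotientGroup.mk'_apply, map_commutatorElement,
    commutatorElement_eq_one_iff_mul_comm]
  exact mul_comm _ _

end IsPGroup

lemma IsPGroup.closure_commutatorElement_pow_le_frattini {G : Type*} [Group G] [Finite G] {p : ℕ}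
    [Fact p.Prime] (hpG : IsPGroup p G) (x y : G) :
    closure {⁅x, y⁆, x ^ p, y ^ p} ≤ frattini G := by
  refine le_iInf₂ fun M hM => ?_
  rw [closure_le]
  rintro _ (rfl | rfl | rfl)
  exacts [hpG.commutatorElement_mem_of_isCoatom hM x y, hpG.pow_mem_of_isCoatom hM x,
    hpG.pow_mem_of_isCoatom hM y]

theorem stmt2 (p : ℕ) (hp : p.Prime) (hodd : Odd p) {G : Type*} [Group G] [Finite G]
    (hpG : IsPGroup p G) (x y : G) (hgen : Subgroup.closure {x, y} = ⊤)
    (hna : ∃ a b : G, a * b ≠ b * a)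
    (hx : x ^ p ∈ Subgroup.center G) (hy : y ^ p ∈ Subgroup.center G)
    (hcyc : IsCyclic (commutator G)) :
    frattini G = Subgroup.center G ∧
    Nonempty ((G ⧸ Subgroup.center G) ≃*
      (Multiplicative (ZMod p) × Multiplicative (ZMod p))) := by
  have := Fact.mk hp
  have hc : ⁅x, y⁆ ∈ center G := hpG.commutatorElement_mem_center hp hodd hgen hx hy
  obtain ⟨φ, hφ⟩ := QuotientGroup.exists_zmod_prod_surjective hgen (center G) hc hx hy
  have hnc : ¬IsCyclic (G ⧸ center G) := fun _ => by
    obtain ⟨a, b, hab⟩ := hna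
    exact hab ((MonoidHom.isMulCommutative_of_isCyclic_of_ker_le_center (QuotientGroup.mk' _)
      (QuotientGroup.ker_mk' _).le).is_comm.comm a b)
  have hindex : (center G).index = p ^ 2 := by
    rw [index_eq_card]
    exact card_eq_prime_sq_of_not_isCyclic hp (index_eq_card (center G) ▸
      index_dvd_sq_of_closure_pair_eq_top hgen hc hx hy) hnc
  have hbij : Function.Bijective φ := (Nat.bijective_iff_surjective_and_card φ).mpr
    ⟨hφ, by rw [Nat.card_prod, Nat.card_multiplicative_zmod, ← index_eq_card, hindex, sq]⟩
  let e := MulEquiv.ofBijective φ hbij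
  refine ⟨le_antisymm ?_ ?_, ⟨e.symm⟩⟩
  · have h := frattini_le_ker_of_surjective
      (φ := (e.symm : G ⧸ center G →* _).comp (QuotientGroup.mk' _))
      (e.symm.surjective.comp (QuotientGroup.mk'_surjective _)) (frattini_zmod_prod_eq_bot p)
    rwa [MonoidHom.ker_mulEquiv_comp, QuotientGroup.ker_mk'] at h
  · rw [← closure_commutatorElement_pow_eq_center hgen hc hx hy hindex hp.ne_zero]
    exact hpG.closure_commutatorElement_pow_le_frattini x y
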